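/- For all x, x' ∈ D, κ, κ' ∈ ℝ, and t ≥ 0, the one-sided reflection maps satisfy ‖ψ_κ(x) − ψ_{κ'}(x')‖_t ≤ ‖x − x'‖_t + |κ − κ'| and ‖φ_κ(x) − φ_{κ'}(x')‖_t ≤ 2‖x − x'‖_t + |κ − κ'|. In particular, for κ = κ' the maps ψ_κ and φ_κ are Lipschitz continuous in the uniform norm on [0,t] with constants 1 and 2 respectively. -/

import Mathlib

open MeasureTheory Filter Set
open scoped ENNReal

noncomputable section

/-- `f` is càdlàg on `[0,∞)`: right-continuous at every `t ≥ 0` and possessing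
finite left limits at every `t > 0`.  (Values on `(-∞,0)` are irrelevant.) -/
def Cadlag (f : ℝ → ℝ) : Prop :=
  (∀ t : ℝ, 0 ≤ t → ContinuousWithinAt f (Set.Ici t) t) ∧
    (∀ t : ℝ, 0 < t → ∃ L : ℝ, Filter.Tendsto f (nhdsWithin t (Set.Iio t)) (nhds L))

/-- Uniform norm of `x` on `[0,t]`: `‖x‖_t = sup_{0 ≤ s ≤ t} |x(s)|`. -/
def unif (x : ℝ → ℝ) (t : ℝ) : ℝ := ⨆ s : Set.Icc (0:ℝ) t, |x s.1|

/-- Regulator of the one-sided reflection map with upper barrier `κ ∈ ℝ`: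
`ψ_κ(x)(t) = sup_{0 ≤ s ≤ t} (x(s) - κ)⁺`. -/
def psiR (κ : ℝ) (x : ℝ → ℝ) (t : ℝ) : ℝ := ⨆ s : Set.Icc (0:ℝ) t, max (x s.1 - κ) 0

/-- One-sided reflection map with upper barrier `κ ∈ ℝ`: `φ_κ(x) = x - ψ_κ(x)`. -/
def phiR (κ : ℝ) (x : ℝ → ℝ) (t : ℝ) : ℝ := x t - psiR κ x t

/-- Regulator for a barrier `κ ∈ [0,∞]`; for `κ = ∞` it is identically `0`. -/
def psiE (κ : ℝ≥0∞) (x : ℝ → ℝ) : ℝ → ℝ := if κ = ⊤ then 0 else psiR κ.toReal x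

/-- Reflection map for a barrier `κ ∈ [0,∞]`; for `κ = ∞` it is the identity. -/
def phiE (κ : ℝ≥0∞) (x : ℝ → ℝ) : ℝ → ℝ := if κ = ⊤ then x else phiR κ.toReal x

/-- "`∫ 𝟙_S du = 0`": every Stieltjes function agreeing with the
(constant-below-zero extension of) `u` assigns measure zero to `S`. -/
def ZeroStieltjesOn (u : ℝ → ℝ) (S : Set ℝ) : Prop :=
  ∀ sf : StieltjesFunction ℝ, (∀ t : ℝ, sf t = u (max t 0)) → sf.measure S = 0

/-- `u₁, u₂` is a valid pair of regulator processes for `x₁` (barrier `0` from above)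
and `x₂` (upper barrier `B ∈ [0,∞]`): nondecreasing nonnegative elements of `D` with
`∫₀^∞ 𝟙{x₁(t) < 0} du₁(t) = 0` and `∫₀^∞ 𝟙{x₂(t) < B} du₂(t) = 0`. -/
def IsRegulator (B : ℝ≥0∞) (x₁ x₂ u₁ u₂ : ℝ → ℝ) : Prop :=
  Cadlag u₁ ∧ Cadlag u₂ ∧ MonotoneOn u₁ (Set.Ici 0) ∧ MonotoneOn u₂ (Set.Ici 0) ∧
    (∀ t ≥ (0:ℝ), 0 ≤ u₁ t) ∧ (∀ t ≥ (0:ℝ), 0 ≤ u₂ t) ∧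
    ZeroStieltjesOn u₁ {t | 0 ≤ t ∧ x₁ t < 0} ∧
    ZeroStieltjesOn u₂ {t | 0 ≤ t ∧ ENNReal.ofReal (x₂ t) < B}


/-! The map `(a, κ) ↦ (a - κ)⁺` is 1-Lipschitz in each argument, and a supremum over `[0, s]` of
such functions inherits the bound; this gives the estimate for `ψ`, and the one for `φ = x - ψ`
follows by the triangle inequality. Right-continuity and left limits make a càdlàg path locally
bounded on `[0, ∞)`, hence bounded on the compact `[0, t]`, so every supremum involved is a genuine
one rather than the junk value `0` of an unbounded `⨆`. -/

open Topology

namespace Cadlag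

variable {f g : ℝ → ℝ}

theorem sub (hf : Cadlag f) (hg : Cadlag g) : Cadlag (f - g) := by
  refine ⟨fun t ht => (hf.1 t ht).sub (hg.1 t ht), fun t ht => ?_⟩
  obtain ⟨L, hL⟩ := hf.2 t ht
  obtain ⟨M, hM⟩ := hg.2 t ht
  exact ⟨L - M, hL.sub hM⟩

theorem isBoundedUnder_abs (hf : Cadlag f) {s : ℝ} (hs : 0 ≤ s) :
    (𝓝[Ici 0] s).IsBoundedUnder (· ≤ ·) fun u => |f u| := by
  have hright := (hf.1 s hs).tendsto.abs.isBoundedUnder_le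
  rcases hs.eq_or_lt with rfl | hpos
  · exact hright
  obtain ⟨L, hL⟩ := hf.2 s hpos
  refine IsBoundedUnder.mono nhdsWithin_le_nhds ?_
  rw [← nhdsLT_sup_nhdsGE, IsBoundedUnder, map_sup]
  exact isBounded_sup hL.abs.isBoundedUnder_le hright

theorem bddAbove_abs_image_Icc (hf : Cadlag f) (t : ℝ) :
    BddAbove ((fun s => |f s|) '' Icc 0 t) := by
  refine isCompact_Icc.induction_on (p := fun U => BddAbove ((fun s => |f s|) '' U))
    (by simp) (fun U V hUV hV => hV.mono (image_mono hUV))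
    (fun U V hU hV => by simpa only [image_union] using hU.union hV) fun s hs => ?_
  obtain ⟨U, hU, hmem⟩ := isBoundedUnder_iff_eventually_bddAbove.1 <|
    (hf.isBoundedUnder_abs hs.1).mono (nhdsWithin_mono s Icc_subset_Ici_self)
  exact ⟨U, hmem, hU⟩

theorem bddAbove_image_Icc (hf : Cadlag f) (t : ℝ) : BddAbove (f '' Icc 0 t) := by
  obtain ⟨M, hM⟩ := hf.bddAbove_abs_image_Icc t
  exact ⟨M, by rintro _ ⟨s, hs, rfl⟩; exact (le_abs_self _).trans (hM ⟨s, hs, rfl⟩)⟩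

end Cadlag

section UniformNorm

variable {x : ℝ → ℝ} {t : ℝ}

theorem unif_nonneg : 0 ≤ unif x t := Real.iSup_nonneg fun _ => abs_nonneg _

theorem abs_le_unif (hx : BddAbove ((fun s => |x s|) '' Icc 0 t)) {s : ℝ} (hs : s ∈ Icc 0 t) :
    |x s| ≤ unif x t :=
  le_ciSup (f := fun s : Icc 0 t => |x s|) (by rwa [image_eq_range] at hx) ⟨s, hs⟩

theorem unif_le {C : ℝ} (hC : 0 ≤ C) (h : ∀ s ∈ Icc 0 t, |x s| ≤ C) : unif x t ≤ C :=
  Real.iSup_le (fun s => h s s.2) hC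

end UniformNorm

section Reflection

variable {y y' : ℝ → ℝ} {c c' s D : ℝ}

theorem psiR_nonneg : 0 ≤ psiR c y s := Real.iSup_nonneg fun _ => le_max_right _ _

theorem psiR_le_psiR_add (hy' : BddAbove (y' '' Icc 0 s)) (hD : 0 ≤ D)
    (h : ∀ u ∈ Icc 0 s, |y u - y' u| ≤ D) : psiR c y s ≤ psiR c' y' s + (D + |c - c'|) := by
  obtain ⟨M, hM⟩ := hy'
  have hbdd : BddAbove (range fun u : Icc 0 s => max (y' u - c') 0) :=
    ⟨max (M - c') 0, by
      rintro _ ⟨u, rfl⟩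
      exact max_le_max (by linarith [hM (mem_image_of_mem y' u.2)]) le_rfl⟩
  refine Real.iSup_le (fun u => ?_) (add_nonneg psiR_nonneg (by positivity))
  have hsup : max (y' u - c') 0 ≤ psiR c' y' s := le_ciSup hbdd u
  have hshift : |(y u - c) - (y' u - c')| ≤ |y u - y' u| + |c - c'| := by
    rw [sub_sub_sub_comm]; exact abs_sub _ _
  linarith [le_abs_self (max (y u - c) 0 - max (y' u - c') 0),
    abs_max_sub_max_le_abs (y u - c) (y' u - c') 0, h u u.2]

theorem abs_psiR_sub_psiR_le (hy : BddAbove (y '' Icc 0 s)) (hy' : BddAbove (y' '' Icc 0 s))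
    (hD : 0 ≤ D) (h : ∀ u ∈ Icc 0 s, |y u - y' u| ≤ D) :
    |psiR c y s - psiR c' y' s| ≤ D + |c - c'| := by
  have hle := psiR_le_psiR_add (c := c) (c' := c') hy' hD h
  have hge := psiR_le_psiR_add (c := c') (c' := c) hy hD fun u hu => by
    rw [abs_sub_comm]; exact h u hu
  rw [abs_sub_comm c'] at hge
  exact abs_sub_le_iff.2 ⟨by linarith, by linarith⟩

theorem abs_phiR_sub_phiR_le (hy : BddAbove (y '' Icc 0 s)) (hy' : BddAbove (y' '' Icc 0 s))
    (hs : 0 ≤ s) (hD : 0 ≤ D) (h : ∀ u ∈ Icc 0 s, |y u - y' u| ≤ D) :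
    |phiR c y s - phiR c' y' s| ≤ 2 * D + |c - c'| :=
  calc |phiR c y s - phiR c' y' s| = |(y s - y' s) - (psiR c y s - psiR c' y' s)| := by
        simp only [phiR]; ring_nf
    _ ≤ |y s - y' s| + |psiR c y s - psiR c' y' s| := abs_sub _ _
    _ ≤ D + (D + |c - c'|) :=
        add_le_add (h s ⟨hs, le_rfl⟩) (abs_psiR_sub_psiR_le hy hy' hD h)
    _ = 2 * D + |c - c'| := by ring

end Reflection

theorem reflection_map_lipschitz_general
    (x x' : ℝ → ℝ) (hx : Cadlag x) (hx' : Cadlag x') (κ κ' : ℝ)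
    (t : ℝ) :
    (unif (fun s => psiR κ x s - psiR κ' x' s) t ≤
        unif (fun s => x s - x' s) t + |κ - κ'|) ∧
    (unif (fun s => phiR κ x s - phiR κ' x' s) t ≤
        2 * unif (fun s => x s - x' s) t + |κ - κ'|) ∧
    (κ = κ' →
      unif (fun s => psiR κ x s - psiR κ x' s) t ≤ unif (fun s => x s - x' s) t ∧
      unif (fun s => phiR κ x s - phiR κ x' s) t ≤ 2 * unif (fun s => x s - x' s) t) := by
  set D := unif (fun s => x s - x' s) t
  have hD : 0 ≤ D := unif_nonneg
  have hdiff : ∀ s ∈ Icc 0 t, ∀ u ∈ Icc 0 s, |x u - x' u| ≤ D := fun s hs u hu =>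
    abs_le_unif ((hx.sub hx').bddAbove_abs_image_Icc t) ⟨hu.1, hu.2.trans hs.2⟩
  have hbdd {z : ℝ → ℝ} (hz : Cadlag z) {s : ℝ} (hs : s ∈ Icc 0 t) : BddAbove (z '' Icc 0 s) :=
    (hz.bddAbove_image_Icc t).mono (image_mono (Icc_subset_Icc_right hs.2))
  have hpsi : unif (fun s => psiR κ x s - psiR κ' x' s) t ≤ D + |κ - κ'| :=
    unif_le (by positivity) fun s hs =>
      abs_psiR_sub_psiR_le (hbdd hx hs) (hbdd hx' hs) hD (hdiff s hs)
  have hphi : unif (fun s => phiR κ x s - phiR κ' x' s) t ≤ 2 * D + |κ - κ'| :=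
    unif_le (by positivity) fun s hs =>
      abs_phiR_sub_phiR_le (hbdd hx hs) (hbdd hx' hs) hs.1 hD (hdiff s hs)
  refine ⟨hpsi, hphi, fun hκ => ?_⟩
  subst hκ
  simpa only [sub_self, abs_zero, add_zero] using And.intro hpsi hphi

/-- **Lipschitz-type bounds for the one-sided reflection maps** (inequalities
(11)-(12) of the paper): for `x, x' ∈ D`, `κ, κ' ∈ ℝ` and `t ≥ 0`,
`‖ψ_κ(x) − ψ_{κ'}(x')‖_t ≤ ‖x − x'‖_t + |κ − κ'|` and
`‖φ_κ(x) − φ_{κ'}(x')‖_t ≤ 2‖x − x'‖_t + |κ − κ'|`.  In particular, for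
`κ = κ'` the maps `ψ_κ` and `φ_κ` are Lipschitz with constants `1` and `2`. -/
theorem reflection_map_lipschitz
    (x x' : ℝ → ℝ) (hx : Cadlag x) (hx' : Cadlag x') (κ κ' : ℝ)
    (t : ℝ) (ht : 0 ≤ t) :
    (unif (fun s => psiR κ x s - psiR κ' x' s) t ≤
        unif (fun s => x s - x' s) t + |κ - κ'|) ∧
    (unif (fun s => phiR κ x s - phiR κ' x' s) t ≤
        2 * unif (fun s => x s - x' s) t + |κ - κ'|) ∧
    (κ = κ' →
      unif (fun s => psiR κ x s - psiR κ x' s) t ≤ unif (fun s => x s - x' s) t ∧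
      unif (fun s => phiR κ x s - phiR κ x' s) t ≤ 2 * unif (fun s => x s - x' s) t) :=
  reflection_map_lipschitz_general x x' hx hx' κ κ' t
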